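/- Let n > 2k and γ > 0, and let φ_0 = k(n−k) be the largest eigenvalue of the adjacency matrix A of J(n,k). Then there is exactly one real number λ < −γφ_0 such that H admits a nonzero eigenvector in H_inv with eigenvalue λ; moreover, this λ equals the smallest eigenvalue of H. -/

import Mathlib

open Matrix

/-- Vertices of the Johnson graph `J(n,k)`: the `k`-element subsets of `{1,…,n}`. -/
abbrev JV (n k : ℕ) := {s : Finset (Fin n) // s.card = k}

/-- The Johnson graph `J(n,k)`. -/
def JohnsonGraph (n k : ℕ) : SimpleGraph (JV n k) where
  Adj v w := (v.1 ∩ w.1).card = k - 1 ∧ v ≠ w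
  symm := by
    constructor
    intro v w h
    exact ⟨by rw [Finset.inter_comm]; exact h.1, h.2.symm⟩
  loopless := by constructor; intro v h; exact h.2 rfl

instance (n k : ℕ) : DecidableRel (JohnsonGraph n k).Adj :=
  fun _ _ => instDecidableAnd

/-- The (real) adjacency matrix of the Johnson graph `J(n,k)`. -/
noncomputable def JA (n k : ℕ) : Matrix (JV n k) (JV n k) ℝ :=
  (JohnsonGraph n k).adjMatrix ℝ

/-- The search Hamiltonian `H = -γ•A - e_{w1} e_{w1}ᵀ - e_{w2} e_{w2}ᵀ` on `J(n,k)`. -/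
noncomputable def JH (n k : ℕ) (w1 w2 : JV n k) (γ : ℝ) : Matrix (JV n k) (JV n k) ℝ :=
  (-γ) • JA n k - Matrix.vecMulVec (Pi.single w1 1) (Pi.single w1 1)
    - Matrix.vecMulVec (Pi.single w2 1) (Pi.single w2 1)

/-- `μ` is a (real) eigenvalue of the matrix `M`. -/
def IsEig {V : Type*} [Fintype V] (M : Matrix V V ℝ) (μ : ℝ) : Prop :=
  ∃ x, x ≠ 0 ∧ M.mulVec x = μ • x

/-- The action of a permutation of `{1,…,n}` on `k`-subsets. -/
def permAct {n k : ℕ} (g : Equiv.Perm (Fin n)) (v : JV n k) : JV n k :=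
  ⟨v.1.image ⇑g, by rw [Finset.card_image_of_injective _ g.injective]; exact v.2⟩

/-- `g` fixes the set `{w1, w2}` of marked vertices setwise. -/
def fixesW {n k : ℕ} (w1 w2 : JV n k) (g : Equiv.Perm (Fin n)) : Prop :=
  ({permAct g w1, permAct g w2} : Finset (JV n k)) = {w1, w2}

/-- The subspace `H_inv` of vectors invariant under the group `𝔊` of permutations
fixing `{w1, w2}` setwise. -/
def Hinv {n k : ℕ} (w1 w2 : JV n k) : Set (JV n k → ℝ) :=
  {x | ∀ g : Equiv.Perm (Fin n), fixesW w1 w2 g → ∀ v, x (permAct g v) = x v}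

/-! ### Auxiliary lemmas -/

open Finset

section Spectral

theorem minEig {ι : Type*} [Fintype ι] [DecidableEq ι] [Nonempty ι]
    (M : Matrix ι ι ℝ) (hM : M.IsHermitian) :
    ∃ lam : ℝ, (∃ x : ι → ℝ, x ≠ 0 ∧ M *ᵥ x = lam • x) ∧
      (∀ x : ι → ℝ, lam * (x ⬝ᵥ x) ≤ x ⬝ᵥ (M *ᵥ x)) ∧
      (∀ x : ι → ℝ, x ⬝ᵥ (M *ᵥ x) = lam * (x ⬝ᵥ x) → M *ᵥ x = lam • x) := by
  classical
  obtain ⟨i0, hi0⟩ := Finset.exists_min_image Finset.univ hM.eigenvalues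
    ⟨Classical.arbitrary ι, Finset.mem_univ _⟩
  set lam := hM.eigenvalues i0 with hlam
  have hmin : ∀ i, lam ≤ hM.eigenvalues i := fun i => hi0.2 i (mem_univ i)
  set B := hM.eigenvectorBasis with hB
  have hBe : ∀ i v, (hM.eigenvalues i) * B i v = ∑ u, M v u * B i u := by
    intro i v
    have h := congrFun (hM.mulVec_eigenvectorBasis i) v
    exact h.symm
  have key : ∀ x : ι → ℝ, ∃ d : ι → ℝ,
      (∀ v, x v = ∑ i, d i * B i v)
      ∧ (∀ v, (M *ᵥ x) v = ∑ i, (hM.eigenvalues i * d i) * B i v)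
      ∧ (x ⬝ᵥ (M *ᵥ x) = ∑ i, hM.eigenvalues i * (d i)^2)
      ∧ (x ⬝ᵥ x = ∑ i, (d i)^2) := by
    intro x
    set y : EuclideanSpace ℝ ι := (WithLp.equiv 2 _).symm x with hy
    set d : ι → ℝ := fun i => B.repr y i with hd
    have hdi : ∀ i, d i = ∑ v, B i v * x v := by
      intro i
      show B.repr y i = _
      rw [B.repr_apply_apply]
      rw [PiLp.inner_apply]
      simp only [RCLike.inner_apply, conj_trivial]
      exact Finset.sum_congr rfl fun j _ => mul_comm _ _
    have hx : ∀ v, x v = ∑ i, d i * B i v := by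
      have h1 : x = (WithLp.equiv 2 _) (∑ i, d i • B i) := by
        rw [B.sum_repr y]; rfl
      have h2 : (WithLp.equiv 2 _) (∑ i, d i • B i) = ∑ i, d i • (⇑(B i) : ι → ℝ) := by simp
      intro v
      rw [h1, h2, Finset.sum_apply]
      simp [smul_eq_mul]
    have hMx : ∀ v, (M *ᵥ x) v = ∑ i, (hM.eigenvalues i * d i) * B i v := by
      intro v
      rw [mulVec, dotProduct]
      calc ∑ u, M v u * x u = ∑ u, ∑ i, d i * (M v u * B i u) := by
            apply Finset.sum_congr rfl; intro u _
            rw [hx u, Finset.mul_sum]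
            apply Finset.sum_congr rfl; intro i _; ring
        _ = ∑ i, ∑ u, d i * (M v u * B i u) := Finset.sum_comm
        _ = ∑ i, (hM.eigenvalues i * d i) * B i v := by
            apply Finset.sum_congr rfl; intro i _
            rw [← Finset.mul_sum, ← hBe]; ring
    refine ⟨d, hx, hMx, ?_, ?_⟩
    · rw [dotProduct]
      calc ∑ v, x v * (M *ᵥ x) v = ∑ v, ∑ i, (hM.eigenvalues i * d i) * (B i v * x v) := by
            apply Finset.sum_congr rfl; intro v _
            rw [hMx v, Finset.mul_sum]
            apply Finset.sum_congr rfl; intro i _; ring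
        _ = ∑ i, ∑ v, (hM.eigenvalues i * d i) * (B i v * x v) := Finset.sum_comm
        _ = ∑ i, hM.eigenvalues i * (d i)^2 := by
            apply Finset.sum_congr rfl; intro i _
            rw [← Finset.mul_sum, ← hdi]; ring
    · rw [dotProduct]
      calc ∑ v, x v * x v = ∑ v, ∑ i, d i * (B i v * x v) := by
            apply Finset.sum_congr rfl; intro v _
            rw [show x v * x v = (∑ i, d i * B i v) * x v by rw [← hx v], Finset.sum_mul]
            apply Finset.sum_congr rfl; intro i _; ring
        _ = ∑ i, ∑ v, d i * (B i v * x v) := Finset.sum_comm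
        _ = ∑ i, (d i)^2 := by
            apply Finset.sum_congr rfl; intro i _
            rw [← Finset.mul_sum, ← hdi]; ring
  refine ⟨lam, ⟨⇑(B i0), ?_, ?_⟩, ?_, ?_⟩
  · intro h
    have hB1 := B.orthonormal.1 i0
    have h0 : B i0 = 0 := by
      apply (WithLp.equiv 2 _).symm.injective
      have : (WithLp.equiv 2 _) (B i0) = (0 : ι → ℝ) := h
      simpa using congrArg (WithLp.equiv 2 _).symm this
    rw [h0] at hB1; simp at hB1
  · exact hM.mulVec_eigenvectorBasis i0
  · intro x
    obtain ⟨d, -, -, h2, h3⟩ := key x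
    rw [h2, h3, Finset.mul_sum]
    exact Finset.sum_le_sum fun i _ => mul_le_mul_of_nonneg_right (hmin i) (sq_nonneg _)
  · intro x hx
    obtain ⟨d, h0, h1, h2, h3⟩ := key x
    have hz : ∑ i, (hM.eigenvalues i - lam) * (d i)^2 = 0 := by
      rw [h2, h3, Finset.mul_sum] at hx
      have := sub_eq_zero.2 hx
      rw [← Finset.sum_sub_distrib] at this
      rw [← this]
      apply Finset.sum_congr rfl; intro i _; ring
    have hterm : ∀ i ∈ Finset.univ (α := ι), (hM.eigenvalues i - lam) * (d i)^2 = 0 :=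
      (Finset.sum_eq_zero_iff_of_nonneg fun i _ =>
        mul_nonneg (by linarith [hmin i]) (sq_nonneg _)).1 hz
    have heq : ∀ i, hM.eigenvalues i * d i = lam * d i := by
      intro i
      rcases mul_eq_zero.1 (hterm i (mem_univ i)) with h | h
      · rw [show hM.eigenvalues i = lam by linarith]
      · rw [pow_eq_zero_iff (two_ne_zero) |>.1 h]; ring
    funext v
    rw [h1 v]
    show _ = lam * x v
    rw [h0 v, Finset.mul_sum]
    apply Finset.sum_congr rfl; intro i _
    rw [heq i]; ring

lemma dotProduct_self_nonneg {ι : Type*} [Fintype ι] (x : ι → ℝ) : 0 ≤ x ⬝ᵥ x :=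
  Finset.sum_nonneg fun i _ => mul_self_nonneg (x i)

lemma dotProduct_self_pos {ι : Type*} [Fintype ι] {x : ι → ℝ} (hx : x ≠ 0) : 0 < x ⬝ᵥ x := by
  obtain ⟨u, hu⟩ := Function.ne_iff.1 hx
  have h1 : (0:ℝ) < x u * x u := mul_self_pos.2 hu
  calc (0:ℝ) < x u * x u := h1
    _ ≤ ∑ v, x v * x v :=
      Finset.single_le_sum (fun v _ => mul_self_nonneg (x v)) (Finset.mem_univ u)

end Spectral

section Johnson

lemma johnson_degree (n k : ℕ) (hk : 1 ≤ k) (hkn : k ≤ n) (v : JV n k) :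
    (JohnsonGraph n k).degree v = k * (n - k) := by
  classical
  have hcard : k * (n - k) = (v.1 ×ˢ v.1ᶜ).card := by
    rw [Finset.card_product, v.2, Finset.card_compl, v.2, Fintype.card_fin]
  rw [SimpleGraph.degree, hcard]
  symm
  apply Finset.card_bij (i := fun (p : Fin n × Fin n) (hp : p ∈ v.1 ×ˢ v.1ᶜ) =>
      (⟨insert p.2 (v.1.erase p.1), by
        rcases Finset.mem_product.1 hp with ⟨h1, h2⟩
        rw [Finset.card_insert_of_notMem, Finset.card_erase_of_mem h1, v.2]
        · omega
        · intro hmem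
          exact (Finset.mem_compl.1 h2) (Finset.mem_of_mem_erase hmem)⟩ : JV n k))
  · -- membership
    rintro ⟨i, j⟩ hp
    rcases Finset.mem_product.1 hp with ⟨h1, h2⟩
    have h2' : j ∉ v.1 := Finset.mem_compl.1 h2
    rw [SimpleGraph.mem_neighborFinset]
    refine ⟨?_, ?_⟩
    · have hint : v.1 ∩ insert j (v.1.erase i) = v.1.erase i := by
        ext a
        simp only [Finset.mem_inter, Finset.mem_insert, Finset.mem_erase]
        constructor
        · rintro ⟨ha, rfl | hb⟩
          · exact absurd ha h2'
          · exact hb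
        · rintro ⟨ha, hb⟩; exact ⟨hb, Or.inr ⟨ha, hb⟩⟩
      show (v.1 ∩ insert j (v.1.erase i)).card = k - 1
      rw [hint, Finset.card_erase_of_mem h1, v.2]
    · intro hvw
      apply h2'
      rw [show v.1 = insert j (v.1.erase i) from congrArg Subtype.val hvw]
      exact Finset.mem_insert_self _ _
  · -- injectivity
    rintro ⟨i, j⟩ hp ⟨i', j'⟩ hp' heq
    rcases Finset.mem_product.1 hp with ⟨h1, h2⟩
    rcases Finset.mem_product.1 hp' with ⟨h1', h2'⟩
    have h2c : j ∉ v.1 := Finset.mem_compl.1 h2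
    have h2c' : j' ∉ v.1 := Finset.mem_compl.1 h2'
    have heq' : insert j (v.1.erase i) = insert j' (v.1.erase i') := congrArg Subtype.val heq
    have hdiff : ∀ (a : Fin n) (b : Fin n), a ∈ v.1 → b ∉ v.1 →
        (insert b (v.1.erase a)) \ v.1 = {b} ∧ v.1 \ (insert b (v.1.erase a)) = {a} := by
      intro a b ha hb
      constructor
      · ext c
        simp only [Finset.mem_sdiff, Finset.mem_insert, Finset.mem_erase, Finset.mem_singleton]
        constructor
        · rintro ⟨rfl | hc, hcv⟩
          · rfl
          · exact absurd hc.2 hcv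
        · rintro rfl; exact ⟨Or.inl rfl, hb⟩
      · ext c
        simp only [Finset.mem_sdiff, Finset.mem_insert, Finset.mem_erase, Finset.mem_singleton]
        constructor
        · rintro ⟨hcv, hc⟩
          push_neg at hc
          by_contra hne
          exact (hc.2 hne) hcv
        · rintro rfl
          refine ⟨ha, ?_⟩
          push_neg
          refine ⟨fun h => hb (h ▸ ha), fun h _ => (h rfl).elim⟩
    obtain ⟨hd1, hd2⟩ := hdiff i j h1 h2c
    obtain ⟨hd1', hd2'⟩ := hdiff i' j' h1' h2c'
    have e1 : (insert j (v.1.erase i)) \ v.1 = {j'} := by rw [heq']; exact hd1'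
    have e2 : v.1 \ (insert j (v.1.erase i)) = {i'} := by rw [heq']; exact hd2'
    have hj : j = j' := Finset.singleton_injective (hd1.symm.trans e1)
    have hi : i = i' := Finset.singleton_injective (hd2.symm.trans e2)
    simp [hi, hj]
  · -- surjectivity
    intro w hw
    rw [SimpleGraph.mem_neighborFinset] at hw
    obtain ⟨hcard1, hne⟩ := hw
    have hc1 : (v.1 \ w.1).card = 1 := by
      have := Finset.card_sdiff_add_card_inter v.1 w.1
      rw [hcard1, v.2] at this; omega
    have hc2 : (w.1 \ v.1).card = 1 := by
      have := Finset.card_sdiff_add_card_inter w.1 v.1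
      rw [Finset.inter_comm, hcard1, w.2] at this; omega
    obtain ⟨i, hi⟩ := Finset.card_eq_one.1 hc1
    obtain ⟨j, hj⟩ := Finset.card_eq_one.1 hc2
    have hiv : i ∈ v.1 ∧ i ∉ w.1 := by
      have : i ∈ v.1 \ w.1 := hi ▸ Finset.mem_singleton_self i
      exact ⟨(Finset.mem_sdiff.1 this).1, (Finset.mem_sdiff.1 this).2⟩
    have hjv : j ∈ w.1 ∧ j ∉ v.1 := by
      have : j ∈ w.1 \ v.1 := hj ▸ Finset.mem_singleton_self j
      exact ⟨(Finset.mem_sdiff.1 this).1, (Finset.mem_sdiff.1 this).2⟩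
    refine ⟨(i, j), Finset.mem_product.2 ⟨hiv.1, Finset.mem_compl.2 hjv.2⟩, ?_⟩
    apply Subtype.ext
    show insert j (v.1.erase i) = w.1
    symm
    have hwdec : w.1 = (w.1 \ v.1) ∪ (w.1 ∩ v.1) := (Finset.sdiff_union_inter _ _).symm
    have hwv : w.1 ∩ v.1 = v.1.erase i := by
      rw [Finset.inter_comm, ← Finset.sdiff_sdiff_self_left v.1 w.1, hi, Finset.erase_eq]
    rw [hwdec, hwv, hj, ← Finset.insert_eq]

section Perm
variable {n k : ℕ}

@[simp] lemma permAct_one (v : JV n k) : permAct (1 : Equiv.Perm (Fin n)) v = v := by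
  apply Subtype.ext; simp [permAct]

lemma permAct_mul (g h : Equiv.Perm (Fin n)) (v : JV n k) :
    permAct (g * h) v = permAct g (permAct h v) := by
  apply Subtype.ext
  show v.1.image ⇑(g * h) = (v.1.image ⇑h).image ⇑g
  rw [Finset.image_image]
  rfl

lemma permAct_inv_act (g : Equiv.Perm (Fin n)) (v : JV n k) :
    permAct g⁻¹ (permAct g v) = v := by
  rw [← permAct_mul, inv_mul_cancel, permAct_one]

lemma permAct_act_inv (g : Equiv.Perm (Fin n)) (v : JV n k) :
    permAct g (permAct g⁻¹ v) = v := by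
  rw [← permAct_mul, mul_inv_cancel, permAct_one]

lemma permAct_injective (g : Equiv.Perm (Fin n)) :
    Function.Injective (permAct (k := k) g) := by
  intro u v h
  have := congrArg (permAct g⁻¹) h
  rwa [permAct_inv_act, permAct_inv_act] at this

/-- `permAct g` as an equivalence. -/
def permActEquiv (g : Equiv.Perm (Fin n)) : JV n k ≃ JV n k where
  toFun := permAct g
  invFun := permAct g⁻¹
  left_inv := permAct_inv_act g
  right_inv := permAct_act_inv g

lemma johnson_adj_perm (g : Equiv.Perm (Fin n)) (u v : JV n k) :
    (JohnsonGraph n k).Adj (permAct g u) (permAct g v) ↔ (JohnsonGraph n k).Adj u v := by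
  show ((u.1.image ⇑g) ∩ (v.1.image ⇑g)).card = k - 1 ∧ _ ↔ _
  rw [← Finset.image_inter _ _ g.injective,
    Finset.card_image_of_injective _ g.injective]
  constructor
  · rintro ⟨h1, h2⟩
    exact ⟨h1, fun h => h2 (by rw [h])⟩
  · rintro ⟨h1, h2⟩
    exact ⟨h1, fun h => h2 (permAct_injective g h)⟩

lemma JA_perm (g : Equiv.Perm (Fin n)) (u v : JV n k) :
    JA n k (permAct g u) (permAct g v) = JA n k u v := by
  simp only [JA, SimpleGraph.adjMatrix_apply, johnson_adj_perm]

variable (w1 w2 : JV n k)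

lemma fixesW_cases (hw : w1 ≠ w2) (g : Equiv.Perm (Fin n)) (hg : fixesW w1 w2 g) :
    (permAct g w1 = w1 ∧ permAct g w2 = w2) ∨ (permAct g w1 = w2 ∧ permAct g w2 = w1) := by
  have h1 : permAct g w1 ∈ ({w1, w2} : Finset (JV n k)) := by
    rw [← hg]; exact Finset.mem_insert_self _ _
  have h2 : permAct g w2 ∈ ({w1, w2} : Finset (JV n k)) := by
    rw [← hg]; exact Finset.mem_insert_of_mem (Finset.mem_singleton_self _)
  have hne : permAct g w1 ≠ permAct g w2 := fun h => hw (permAct_injective g h)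
  rcases Finset.mem_insert.1 h1 with ha | ha
  · left
    refine ⟨ha, ?_⟩
    rcases Finset.mem_insert.1 h2 with hb | hb
    · exact absurd (ha.trans hb.symm) hne
    · exact Finset.mem_singleton.1 hb
  · right
    rw [Finset.mem_singleton] at ha
    refine ⟨ha, ?_⟩
    rcases Finset.mem_insert.1 h2 with hb | hb
    · exact hb
    · rw [Finset.mem_singleton] at hb
      exact absurd (ha.trans hb.symm) hne

lemma fixesW_one : fixesW w1 w2 (1 : Equiv.Perm (Fin n)) := by
  show ({permAct 1 w1, permAct 1 w2} : Finset (JV n k)) = {w1, w2}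
  rw [permAct_one, permAct_one]

lemma fixesW_of_maps (g : Equiv.Perm (Fin n))
    (h : (permAct g w1 = w1 ∧ permAct g w2 = w2) ∨ (permAct g w1 = w2 ∧ permAct g w2 = w1)) :
    fixesW w1 w2 g := by
  rcases h with ⟨h1, h2⟩ | ⟨h1, h2⟩
  · show ({permAct g w1, permAct g w2} : Finset (JV n k)) = {w1, w2}
    rw [h1, h2]
  · show ({permAct g w1, permAct g w2} : Finset (JV n k)) = {w1, w2}
    rw [h1, h2, Finset.pair_comm]

lemma fixesW_mul (hw : w1 ≠ w2) (g h : Equiv.Perm (Fin n))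
    (hg : fixesW w1 w2 g) (hh : fixesW w1 w2 h) : fixesW w1 w2 (g * h) := by
  apply fixesW_of_maps
  rcases fixesW_cases w1 w2 hw g hg with ⟨a1, a2⟩ | ⟨a1, a2⟩ <;>
    rcases fixesW_cases w1 w2 hw h hh with ⟨b1, b2⟩ | ⟨b1, b2⟩ <;>
    simp only [permAct_mul, b1, b2, a1, a2] <;> tauto

lemma fixesW_inv (hw : w1 ≠ w2) (g : Equiv.Perm (Fin n))
    (hg : fixesW w1 w2 g) : fixesW w1 w2 g⁻¹ := by
  apply fixesW_of_maps
  rcases fixesW_cases w1 w2 hw g hg with ⟨a1, a2⟩ | ⟨a1, a2⟩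
  · left
    constructor
    · conv_lhs => rw [← a1]
      exact permAct_inv_act g w1
    · conv_lhs => rw [← a2]
      exact permAct_inv_act g w2
  · right
    constructor
    · conv_lhs => rw [← a2]
      exact permAct_inv_act g w2
    · conv_lhs => rw [← a1]
      exact permAct_inv_act g w1

lemma JH_perm (hw : w1 ≠ w2) (γ : ℝ) (g : Equiv.Perm (Fin n)) (hg : fixesW w1 w2 g)
    (u v : JV n k) :
    JH n k w1 w2 γ (permAct g u) (permAct g v) = JH n k w1 w2 γ u v := by
  classical
  have hent : ∀ a b : JV n k, JH n k w1 w2 γ a b = -γ * JA n k a b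
      - (if a = w1 then (1:ℝ) else 0) * (if b = w1 then (1:ℝ) else 0)
      - (if a = w2 then (1:ℝ) else 0) * (if b = w2 then (1:ℝ) else 0) := by
    intro a b
    show (-γ) • JA n k a b - Matrix.vecMulVec (Pi.single w1 1) (Pi.single w1 1) a b
        - Matrix.vecMulVec (Pi.single w2 1) (Pi.single w2 1) a b = _
    rw [Matrix.vecMulVec_apply, Matrix.vecMulVec_apply]
    simp [Pi.single_apply, smul_eq_mul]
  have hiff : ∀ (a b : JV n k), permAct g a = b ↔ a = permAct g⁻¹ b := by
    intro a b
    constructor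
    · rintro rfl; rw [permAct_inv_act]
    · rintro rfl; rw [permAct_act_inv]
  have inj_eq : ∀ (a b c : JV n k), permAct g b = c → (permAct g a = c ↔ a = b) := by
    intro a b c hbc
    constructor
    · intro h; exact permAct_injective g (h.trans hbc.symm)
    · rintro rfl; exact hbc
  rw [hent, hent, JA_perm]
  rcases fixesW_cases w1 w2 hw g hg with ⟨a1, a2⟩ | ⟨a1, a2⟩
  · simp only [fun a => inj_eq a w1 w1 a1, fun a => inj_eq a w2 w2 a2]
  · simp only [fun a => inj_eq a w1 w2 a1, fun a => inj_eq a w2 w1 a2]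
    ring

lemma exists_swapPerm : ∃ g : Equiv.Perm (Fin n), permAct g w1 = w2 ∧ permAct g w2 = w1 := by
  classical
  set s := w1.1 \ w2.1 with hs
  set t := w2.1 \ w1.1 with ht
  have hcard : s.card = t.card := by
    have h1 := Finset.card_sdiff_add_card_inter w1.1 w2.1
    have h2 := Finset.card_sdiff_add_card_inter w2.1 w1.1
    rw [w1.2] at h1
    rw [w2.2, Finset.inter_comm] at h2
    rw [← hs] at h1
    rw [← ht] at h2
    omega
  have hdisj : Disjoint s t := disjoint_sdiff_sdiff
  let e : {x // x ∈ s} ≃ {x // x ∈ t} := Finset.equivOfCardEq hcard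
  let f : Fin n → Fin n := fun x =>
    if h : x ∈ s then (e ⟨x, h⟩ : Fin n)
    else if h : x ∈ t then (e.symm ⟨x, h⟩ : Fin n) else x
  have hfs : ∀ (x) (h : x ∈ s), f x = (e ⟨x, h⟩ : Fin n) := by
    intro x h; simp only [f, dif_pos h]
  have hft : ∀ (x) (h : x ∈ t), f x = (e.symm ⟨x, h⟩ : Fin n) := by
    intro x h
    have hns : x ∉ s := fun hx => (Finset.disjoint_left.1 hdisj) hx h
    simp only [f, dif_neg hns, dif_pos h]
  have hfo : ∀ x, x ∉ s → x ∉ t → f x = x := by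
    intro x h1 h2; simp only [f, dif_neg h1, dif_neg h2]
  have hinv : Function.Involutive f := by
    intro x
    by_cases h1 : x ∈ s
    · rw [hfs x h1]
      have h2 : (e ⟨x, h1⟩ : Fin n) ∈ t := (e ⟨x, h1⟩).2
      rw [hft _ h2]
      have : (⟨(e ⟨x, h1⟩ : Fin n), h2⟩ : {x // x ∈ t}) = e ⟨x, h1⟩ := Subtype.ext rfl
      rw [this, Equiv.symm_apply_apply]
    · by_cases h2 : x ∈ t
      · rw [hft x h2]
        have h3 : (e.symm ⟨x, h2⟩ : Fin n) ∈ s := (e.symm ⟨x, h2⟩).2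
        rw [hfs _ h3]
        have : (⟨(e.symm ⟨x, h2⟩ : Fin n), h3⟩ : {x // x ∈ s}) = e.symm ⟨x, h2⟩ := Subtype.ext rfl
        rw [this, Equiv.apply_symm_apply]
      · rw [hfo x h1 h2, hfo x h1 h2]
  refine ⟨Function.Involutive.toPerm f hinv, ?_, ?_⟩
  · apply Subtype.ext
    show w1.1.image f = w2.1
    apply Finset.eq_of_subset_of_card_le
    · intro y hy
      rw [Finset.mem_image] at hy
      obtain ⟨x, hx, rfl⟩ := hy
      by_cases h1 : x ∈ s
      · rw [hfs x h1]
        exact Finset.mem_sdiff.1 (e ⟨x, h1⟩).2 |>.1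
      · have hx2 : x ∈ w2.1 := by
          by_contra hc
          exact h1 (Finset.mem_sdiff.2 ⟨hx, hc⟩)
        have h2 : x ∉ t := fun hc => (Finset.mem_sdiff.1 hc).2 hx
        rw [hfo x h1 h2]
        exact hx2
    · rw [w2.2, Finset.card_image_of_injective _ hinv.injective, w1.2]
  · apply Subtype.ext
    show w2.1.image f = w1.1
    apply Finset.eq_of_subset_of_card_le
    · intro y hy
      rw [Finset.mem_image] at hy
      obtain ⟨x, hx, rfl⟩ := hy
      by_cases h2 : x ∈ t
      · rw [hft x h2]
        exact Finset.mem_sdiff.1 (e.symm ⟨x, h2⟩).2 |>.1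
      · have hx1 : x ∈ w1.1 := by
          by_contra hc
          exact h2 (Finset.mem_sdiff.2 ⟨hx, hc⟩)
        have h1 : x ∉ s := fun hc => (Finset.mem_sdiff.1 hc).2 hx
        rw [hfo x h1 h2]
        exact hx1
    · rw [w1.2, Finset.card_image_of_injective _ hinv.injective, w2.2]

end Perm

section Main

variable {n k : ℕ}

lemma JH_apply (w1 w2 : JV n k) (γ : ℝ) (a b : JV n k) :
    JH n k w1 w2 γ a b = -γ * JA n k a b
      - (if a = w1 then (1:ℝ) else 0) * (if b = w1 then (1:ℝ) else 0)
      - (if a = w2 then (1:ℝ) else 0) * (if b = w2 then (1:ℝ) else 0) := by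
  classical
  show (-γ) • JA n k a b - Matrix.vecMulVec (Pi.single w1 1) (Pi.single w1 1) a b
      - Matrix.vecMulVec (Pi.single w2 1) (Pi.single w2 1) a b = _
  rw [Matrix.vecMulVec_apply, Matrix.vecMulVec_apply]
  simp [Pi.single_apply, smul_eq_mul]

lemma JA_symm (a b : JV n k) : JA n k a b = JA n k b a := by
  have h := congrFun (congrFun
    (SimpleGraph.transpose_adjMatrix (α := ℝ) (G := JohnsonGraph n k)) a) b
  exact h.symm

lemma JH_symm (w1 w2 : JV n k) (γ : ℝ) (a b : JV n k) :
    JH n k w1 w2 γ a b = JH n k w1 w2 γ b a := by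
  rw [JH_apply, JH_apply, JA_symm]; ring

lemma JH_isHermitian (w1 w2 : JV n k) (γ : ℝ) : (JH n k w1 w2 γ).IsHermitian := by
  apply Matrix.IsHermitian.ext
  intro i j
  rw [JH_symm w1 w2 γ j i]
  exact star_trivial _

lemma JH_dot_symm (w1 w2 : JV n k) (γ : ℝ) (x y : JV n k → ℝ) :
    x ⬝ᵥ ((JH n k w1 w2 γ) *ᵥ y) = ((JH n k w1 w2 γ) *ᵥ x) ⬝ᵥ y := by
  simp only [dotProduct, Matrix.mulVec, Finset.sum_mul, Finset.mul_sum]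
  rw [Finset.sum_comm]
  apply Finset.sum_congr rfl; intro v _
  apply Finset.sum_congr rfl; intro u _
  rw [JH_symm w1 w2 γ v u]; ring

lemma vecMulVec_mulVec' (a x : JV n k → ℝ) :
    (Matrix.vecMulVec a a) *ᵥ x = (a ⬝ᵥ x) • a := by
  funext u
  simp only [Matrix.mulVec, dotProduct, Matrix.vecMulVec_apply, Pi.smul_apply,
    smul_eq_mul, Finset.sum_mul, Finset.mul_sum]
  apply Finset.sum_congr rfl; intro v _; ring

lemma JH_quad (w1 w2 : JV n k) (γ : ℝ) (x : JV n k → ℝ) :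
    x ⬝ᵥ ((JH n k w1 w2 γ) *ᵥ x)
      = -γ * (x ⬝ᵥ ((JA n k) *ᵥ x)) - (x w1)^2 - (x w2)^2 := by
  classical
  rw [JH, Matrix.sub_mulVec, Matrix.sub_mulVec, dotProduct_sub, dotProduct_sub,
    Matrix.smul_mulVec, dotProduct_smul,
    vecMulVec_mulVec', vecMulVec_mulVec']
  simp only [dotProduct_smul, single_dotProduct, dotProduct_single,
    smul_eq_mul, one_mul, mul_one]
  ring

lemma JA_dot (x : JV n k → ℝ) :
    x ⬝ᵥ ((JA n k) *ᵥ x)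
      = ∑ i : JV n k, ∑ j : JV n k, if (JohnsonGraph n k).Adj i j then x i * x j else 0 :=
  SimpleGraph.dotProduct_mulVec_adjMatrix _ _

lemma JH_mulVec_eq (w1 w2 : JV n k) (γ : ℝ) (x : JV n k → ℝ)
    (h1 : x w1 = 0) (h2 : x w2 = 0) :
    x ⬝ᵥ ((JH n k w1 w2 γ) *ᵥ x) = -γ * (x ⬝ᵥ ((JA n k) *ᵥ x)) := by
  rw [JH_quad, h1, h2]; ring

end Main

end Johnson

set_option maxHeartbeats 1000000 in
theorem stmt12 (n k : ℕ) (hk : 1 ≤ k) (hkn : 2 * k < n) (γ : ℝ) (hγ : 0 < γ)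
    (w1 w2 : JV n k) (hw : w1 ≠ w2) :
    ∃ lam : ℝ,
      (lam < -γ * ((k : ℝ) * ((n : ℝ) - (k : ℝ))) ∧
        ∃ v ∈ Hinv w1 w2, v ≠ 0 ∧ (JH n k w1 w2 γ).mulVec v = lam • v) ∧
      (∀ lam' : ℝ, lam' < -γ * ((k : ℝ) * ((n : ℝ) - (k : ℝ))) →
        (∃ v ∈ Hinv w1 w2, v ≠ 0 ∧ (JH n k w1 w2 γ).mulVec v = lam' • v) →
        lam' = lam) ∧
      IsEig (JH n k w1 w2 γ) lam ∧
      (∀ μ : ℝ, IsEig (JH n k w1 w2 γ) μ → lam ≤ μ) := by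
  classical
  have hkn' : k ≤ n := by omega
  have hNE : Nonempty (JV n k) := by
    obtain ⟨s, -, hcard⟩ := Finset.exists_subset_card_eq (s := (Finset.univ : Finset (Fin n))) (n := k)
      (by simpa using hkn')
    exact ⟨⟨s, hcard⟩⟩
  set φ : ℝ := (k : ℝ) * ((n : ℝ) - k) with hφ
  have hφcast : ((k * (n - k) : ℕ) : ℝ) = φ := by
    rw [Nat.cast_mul, Nat.cast_sub hkn']
  have hdeg : ∀ v : JV n k, (((JohnsonGraph n k).degree v : ℕ) : ℝ) = φ := fun v => by
    rw [johnson_degree n k hk hkn' v]; exact hφcast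
  -- Rayleigh bound for the adjacency matrix
  have hdot_sq : ∀ x : JV n k → ℝ, x ⬝ᵥ x = ∑ i, (x i)^2 := by
    intro x
    apply Finset.sum_congr rfl; intro i _; rw [sq]
  have hhalf : ∀ y : JV n k → ℝ,
      (∑ i : JV n k, ∑ j : JV n k, if (JohnsonGraph n k).Adj i j then (y i)^2 else 0)
        = φ * ∑ i, (y i)^2 := by
    intro y
    rw [Finset.mul_sum]
    apply Finset.sum_congr rfl; intro i _
    rw [← Finset.sum_filter, Finset.sum_const, ← SimpleGraph.neighborFinset_eq_filter,
      nsmul_eq_mul, SimpleGraph.card_neighborFinset_eq_degree, hdeg i]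
  have hA_ray : ∀ x : JV n k → ℝ, x ⬝ᵥ ((JA n k) *ᵥ x) ≤ φ * (x ⬝ᵥ x) := by
    intro x
    have hswap : (∑ i : JV n k, ∑ j : JV n k, if (JohnsonGraph n k).Adj i j then (x j)^2 else 0)
        = ∑ j : JV n k, ∑ i : JV n k, if (JohnsonGraph n k).Adj j i then (x j)^2 else 0 := by
      rw [Finset.sum_comm]
      apply Finset.sum_congr rfl; intro j _
      apply Finset.sum_congr rfl; intro i _
      exact if_congr (SimpleGraph.adj_comm _ _ _) rfl rfl
    calc x ⬝ᵥ ((JA n k) *ᵥ x)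
        = ∑ i : JV n k, ∑ j : JV n k, if (JohnsonGraph n k).Adj i j then x i * x j else 0 :=
          JA_dot x
      _ ≤ ∑ i : JV n k, ∑ j : JV n k,
            if (JohnsonGraph n k).Adj i j then ((x i)^2 + (x j)^2)/2 else 0 := by
          apply Finset.sum_le_sum; intro i _
          apply Finset.sum_le_sum; intro j _
          split
          · nlinarith [sq_nonneg (x i - x j)]
          · exact le_refl _
      _ = (∑ i : JV n k, ∑ j : JV n k, ((if (JohnsonGraph n k).Adj i j then (x i)^2 else 0)
            + (if (JohnsonGraph n k).Adj i j then (x j)^2 else 0)))/2 := by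
          rw [Finset.sum_div]
          apply Finset.sum_congr rfl; intro i _
          rw [Finset.sum_div]
          apply Finset.sum_congr rfl; intro j _
          split <;> ring
      _ = ((∑ i : JV n k, ∑ j : JV n k, if (JohnsonGraph n k).Adj i j then (x i)^2 else 0)
            + (∑ i : JV n k, ∑ j : JV n k, if (JohnsonGraph n k).Adj i j then (x j)^2 else 0))/2 := by
          congr 1
          rw [← Finset.sum_add_distrib]
          apply Finset.sum_congr rfl; intro i _
          rw [Finset.sum_add_distrib]
      _ = φ * (x ⬝ᵥ x) := by
          rw [hhalf x, hswap, hhalf x, hdot_sq x]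
          ring
  -- the all-ones vector
  have hA1 : (JA n k) *ᵥ (fun _ => (1:ℝ)) = fun _ => φ := by
    funext v
    show ((JohnsonGraph n k).adjMatrix ℝ *ᵥ fun _ => (1:ℝ)) v = φ
    rw [SimpleGraph.adjMatrix_mulVec_apply, Finset.sum_const,
      nsmul_eq_mul, SimpleGraph.card_neighborFinset_eq_degree, hdeg v, mul_one]
  -- spectral data
  obtain ⟨lam, ⟨v0, hv0ne, hv0eig⟩, hray, heqc⟩ := minEig (JH n k w1 w2 γ) (JH_isHermitian w1 w2 γ)
  -- lam is below the band edge
  have hlam_lt : lam < -γ * φ := by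
    set u : JV n k → ℝ := fun _ => 1 with hu
    have hN : (0:ℝ) < u ⬝ᵥ u := dotProduct_self_pos (by
      intro h
      have := congrFun h (Classical.arbitrary (JV n k))
      simp [hu] at this)
    have huu : u ⬝ᵥ ((JA n k) *ᵥ u) = φ * (u ⬝ᵥ u) := by
      rw [hu, hA1]
      simp [dotProduct, Finset.mul_sum]
      ring
    have hq : u ⬝ᵥ ((JH n k w1 w2 γ) *ᵥ u) = -γ * φ * (u ⬝ᵥ u) - 2 := by
      rw [JH_quad, huu]
      simp [hu]
      ring
    have := hray u
    rw [hq] at this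
    nlinarith
  -- the entrywise absolute value of v0 is also a ground state
  set va : JV n k → ℝ := fun u => |v0 u| with hva
  have hva_dot : va ⬝ᵥ va = v0 ⬝ᵥ v0 := by
    apply Finset.sum_congr rfl; intro i _
    simp [hva, abs_mul_abs_self]
  have hv0_quad : v0 ⬝ᵥ ((JH n k w1 w2 γ) *ᵥ v0) = lam * (v0 ⬝ᵥ v0) := by
    rw [hv0eig, dotProduct_smul, smul_eq_mul]
  have hva_le : va ⬝ᵥ ((JH n k w1 w2 γ) *ᵥ va) ≤ v0 ⬝ᵥ ((JH n k w1 w2 γ) *ᵥ v0) := by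
    rw [JH_quad, JH_quad]
    have h1 : (va w1)^2 = (v0 w1)^2 := by simp [hva, sq_abs]
    have h2 : (va w2)^2 = (v0 w2)^2 := by simp [hva, sq_abs]
    rw [h1, h2]
    have hAcmp : v0 ⬝ᵥ ((JA n k) *ᵥ v0) ≤ va ⬝ᵥ ((JA n k) *ᵥ va) := by
      rw [JA_dot, JA_dot]
      apply Finset.sum_le_sum; intro i _
      apply Finset.sum_le_sum; intro j _
      split
      · calc v0 i * v0 j ≤ |v0 i * v0 j| := le_abs_self _
          _ = va i * va j := by rw [abs_mul]
      · exact le_refl _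
    have := mul_le_mul_of_nonneg_left hAcmp (le_of_lt hγ)
    nlinarith
  have hva_eig : (JH n k w1 w2 γ) *ᵥ va = lam • va := by
    apply heqc
    have hge := hray va
    rw [hva_dot] at hge ⊢
    have : va ⬝ᵥ ((JH n k w1 w2 γ) *ᵥ va) ≤ lam * (v0 ⬝ᵥ v0) := by
      rw [← hv0_quad]; exact hva_le
    linarith
  obtain ⟨u0, hu0⟩ := Function.ne_iff.1 hv0ne
  have hva_u0 : 0 < va u0 := by simp [hva]; exact hu0
  have hva_nonneg : ∀ u, 0 ≤ va u := fun u => abs_nonneg _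
  -- symmetrization over the group
  set Gset : Finset (Equiv.Perm (Fin n)) := Finset.univ.filter (fun g => fixesW w1 w2 g)
    with hGset
  have hmemG : ∀ g, g ∈ Gset ↔ fixesW w1 w2 g := by
    intro g; rw [hGset, Finset.mem_filter]; simp
  set S : JV n k → ℝ := fun u => ∑ g ∈ Gset, va (permAct g u) with hS
  have htrans : ∀ g, fixesW w1 w2 g →
      ∀ u, ∑ v, JH n k w1 w2 γ u v * va (permAct g v) = lam * va (permAct g u) := by
    intro g hg u
    have : ∑ v, JH n k w1 w2 γ u v * va (permAct g v)
        = ∑ v, JH n k w1 w2 γ (permAct g u) (permAct g v) * va (permAct g v) := by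
      apply Finset.sum_congr rfl; intro v _
      rw [JH_perm w1 w2 hw γ g hg]
    rw [this]
    have hre : ∑ v, JH n k w1 w2 γ (permAct g u) (permAct g v) * va (permAct g v)
        = ∑ v', JH n k w1 w2 γ (permAct g u) v' * va v' := by
      apply Fintype.sum_equiv (permActEquiv g)
      intro v; rfl
    rw [hre]
    have : ((JH n k w1 w2 γ) *ᵥ va) (permAct g u) = (lam • va) (permAct g u) := by
      rw [hva_eig]
    simpa [Matrix.mulVec, dotProduct, smul_eq_mul] using this
  have hSeig : (JH n k w1 w2 γ) *ᵥ S = lam • S := by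
    funext u
    show ∑ v, JH n k w1 w2 γ u v * S v = lam * S u
    calc ∑ v, JH n k w1 w2 γ u v * S v
        = ∑ v, ∑ g ∈ Gset, JH n k w1 w2 γ u v * va (permAct g v) := by
          apply Finset.sum_congr rfl; intro v _
          rw [hS, Finset.mul_sum]
      _ = ∑ g ∈ Gset, ∑ v, JH n k w1 w2 γ u v * va (permAct g v) := Finset.sum_comm
      _ = ∑ g ∈ Gset, lam * va (permAct g u) := by
          apply Finset.sum_congr rfl; intro g hg
          exact htrans g ((hmemG g).1 hg) u
      _ = lam * S u := by rw [hS, Finset.mul_sum]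
  have hSinv : S ∈ Hinv w1 w2 := by
    intro h hh v
    show ∑ g ∈ Gset, va (permAct g (permAct h v)) = ∑ g ∈ Gset, va (permAct g v)
    have hstep : ∀ g, va (permAct g (permAct h v)) = va (permAct (g * h) v) := by
      intro g; rw [permAct_mul]
    simp only [hstep]
    apply Finset.sum_nbij' (i := fun g => g * h) (j := fun g => g * h⁻¹)
    · intro g hg
      exact (hmemG _).2 (fixesW_mul w1 w2 hw g h ((hmemG g).1 hg) hh)
    · intro g hg
      exact (hmemG _).2 (fixesW_mul w1 w2 hw g h⁻¹ ((hmemG g).1 hg) (fixesW_inv w1 w2 hw h hh))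
    · intro g _; group
    · intro g _; group
    · intro g _; rfl
  have hSu0 : 0 < S u0 := by
    have h1 : (1 : Equiv.Perm (Fin n)) ∈ Gset := (hmemG 1).2 (fixesW_one w1 w2)
    have h2 : va (permAct (1 : Equiv.Perm (Fin n)) u0) ≤ ∑ g ∈ Gset, va (permAct g u0) :=
      Finset.single_le_sum (f := fun g => va (permAct g u0)) (fun g _ => hva_nonneg _) h1
    rw [permAct_one] at h2
    have h3 : S u0 = ∑ g ∈ Gset, va (permAct g u0) := rfl
    rw [h3]
    linarith
  have hSne : S ≠ 0 := by
    intro h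
    rw [h] at hSu0
    simp at hSu0
  -- swap element and invariance at the marked vertices
  obtain ⟨gs, hgs1, hgs2⟩ := exists_swapPerm w1 w2
  have hgsW : fixesW w1 w2 gs := fixesW_of_maps w1 w2 gs (Or.inr ⟨hgs1, hgs2⟩)
  have hinv_w : ∀ x : JV n k → ℝ, x ∈ Hinv w1 w2 → x w2 = x w1 := by
    intro x hx
    have := hx gs hgsW w1
    rwa [hgs1] at this
  -- dot-product symmetry
  have hsym_dot : ∀ x y : JV n k → ℝ,
      x ⬝ᵥ ((JH n k w1 w2 γ) *ᵥ y) = ((JH n k w1 w2 γ) *ᵥ x) ⬝ᵥ y :=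
    JH_dot_symm w1 w2 γ
  -- conclusion
  refine ⟨lam, ⟨hlam_lt, S, hSinv, hSne, hSeig⟩, ?_, ⟨v0, hv0ne, hv0eig⟩, ?_⟩
  · -- uniqueness
    intro lam' hlt' ⟨v2, hv2inv, hv2ne, hv2eig⟩
    by_contra hne
    -- orthogonality
    have horth : S ⬝ᵥ v2 = 0 := by
      have h1 : lam * (S ⬝ᵥ v2) = lam' * (S ⬝ᵥ v2) := by
        calc lam * (S ⬝ᵥ v2) = (lam • S) ⬝ᵥ v2 := by
              rw [smul_dotProduct, smul_eq_mul]
          _ = ((JH n k w1 w2 γ) *ᵥ S) ⬝ᵥ v2 := by rw [hSeig]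
          _ = S ⬝ᵥ ((JH n k w1 w2 γ) *ᵥ v2) := (hsym_dot S v2).symm
          _ = S ⬝ᵥ (lam' • v2) := by rw [hv2eig]
          _ = lam' * (S ⬝ᵥ v2) := by rw [dotProduct_smul, smul_eq_mul]
      by_contra hc
      exact hne (mul_right_cancel₀ hc (by linarith [h1]) ).symm
    set a : ℝ := v2 w1 with ha'
    set b : ℝ := S w1 with hb'
    set x : JV n k → ℝ := a • S - b • v2 with hx'
    have hx1 : x w1 = 0 := by
      show a * S w1 - b * v2 w1 = 0
      rw [← ha', ← hb']; ring
    have hx2 : x w2 = 0 := by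
      show a * S w2 - b * v2 w2 = 0
      rw [hinv_w S hSinv, hinv_w v2 hv2inv, ← ha', ← hb']; ring
    have hP : 0 < S ⬝ᵥ S := dotProduct_self_pos hSne
    have hQ : 0 < v2 ⬝ᵥ v2 := dotProduct_self_pos hv2ne
    by_cases hx0 : x = 0
    · have hab : a • S = b • v2 := by
        have := sub_eq_zero.1 hx0
        exact this
      by_cases hA : a = 0
      · have hb0 : b • v2 = (0 : JV n k → ℝ) := by rw [← hab, hA, zero_smul]
        have hb : b = 0 := by
          rcases smul_eq_zero.1 hb0 with h | h
          · exact h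
          · exact absurd h hv2ne
        have hSw1 : S w1 = 0 := hb
        have hSw2 : S w2 = 0 := by rw [hinv_w S hSinv]; exact hSw1
        have hquad : S ⬝ᵥ ((JH n k w1 w2 γ) *ᵥ S) = -γ * (S ⬝ᵥ ((JA n k) *ᵥ S)) :=
          JH_mulVec_eq w1 w2 γ S hSw1 hSw2
        have heig : S ⬝ᵥ ((JH n k w1 w2 γ) *ᵥ S) = lam * (S ⬝ᵥ S) := by
          rw [hSeig, dotProduct_smul, smul_eq_mul]
        have h4 := hA_ray S
        nlinarith
      · have hSne' : a • S ≠ 0 := smul_ne_zero hA hSne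
        have h5 : lam • (a • S) = lam' • (a • S) := by
          calc lam • (a • S) = a • (lam • S) := smul_comm _ _ _
            _ = a • ((JH n k w1 w2 γ) *ᵥ S) := by rw [hSeig]
            _ = (JH n k w1 w2 γ) *ᵥ (a • S) := (Matrix.mulVec_smul _ _ _).symm
            _ = (JH n k w1 w2 γ) *ᵥ (b • v2) := by rw [hab]
            _ = b • ((JH n k w1 w2 γ) *ᵥ v2) := Matrix.mulVec_smul _ _ _
            _ = b • (lam' • v2) := by rw [hv2eig]
            _ = lam' • (b • v2) := smul_comm _ _ _
            _ = lam' • (a • S) := by rw [hab]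
        have h6 : (lam - lam') • (a • S) = 0 := by
          rw [sub_smul, h5, sub_self]
        rcases smul_eq_zero.1 h6 with h | h
        · have h7 : lam = lam' := by linarith [h]
          exact hne h7.symm
        · exact hSne' h
    · have hX : 0 < x ⬝ᵥ x := dotProduct_self_pos hx0
      have hHx : (JH n k w1 w2 γ) *ᵥ x = (a * lam) • S - (b * lam') • v2 := by
        rw [hx', Matrix.mulVec_sub, Matrix.mulVec_smul, Matrix.mulVec_smul, hSeig, hv2eig,
          smul_smul, smul_smul]
      have horth' : v2 ⬝ᵥ S = 0 := by rw [dotProduct_comm]; exact horth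
      have hdx : x ⬝ᵥ ((JH n k w1 w2 γ) *ᵥ x)
          = a * a * lam * (S ⬝ᵥ S) + b * b * lam' * (v2 ⬝ᵥ v2) := by
        rw [hHx, hx']
        simp only [sub_dotProduct, dotProduct_sub, smul_dotProduct,
          dotProduct_smul, smul_eq_mul, horth, horth']
        ring
      have hxx : x ⬝ᵥ x = a * a * (S ⬝ᵥ S) + b * b * (v2 ⬝ᵥ v2) := by
        rw [hx']
        simp only [sub_dotProduct, dotProduct_sub, smul_dotProduct,
          dotProduct_smul, smul_eq_mul, horth, horth']
        ring
      have hlow : -γ * φ * (x ⬝ᵥ x) ≤ x ⬝ᵥ ((JH n k w1 w2 γ) *ᵥ x) := by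
        rw [JH_mulVec_eq w1 w2 γ x hx1 hx2]
        have h9 : γ * (x ⬝ᵥ ((JA n k) *ᵥ x)) ≤ γ * (φ * (x ⬝ᵥ x)) :=
          mul_le_mul_of_nonneg_left (hA_ray x) hγ.le
        calc -γ * φ * (x ⬝ᵥ x) = -(γ * (φ * (x ⬝ᵥ x))) := by ring
          _ ≤ -(γ * (x ⬝ᵥ ((JA n k) *ᵥ x))) := neg_le_neg h9
          _ = -γ * (x ⬝ᵥ ((JA n k) *ᵥ x)) := by ring
      rw [hdx, hxx] at hlow
      have hA0 : 0 ≤ a * a * (S ⬝ᵥ S) := mul_nonneg (mul_self_nonneg a) hP.le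
      have hB0 : 0 ≤ b * b * (v2 ⬝ᵥ v2) := mul_nonneg (mul_self_nonneg b) hQ.le
      have h2' : lam' * (b * b * (v2 ⬝ᵥ v2)) ≤ (-γ * φ) * (b * b * (v2 ⬝ᵥ v2)) :=
        mul_le_mul_of_nonneg_right hlt'.le hB0
      have h1' : lam * (a * a * (S ⬝ᵥ S)) ≤ (-γ * φ) * (a * a * (S ⬝ᵥ S)) :=
        mul_le_mul_of_nonneg_right hlam_lt.le hA0
      by_cases hApos : 0 < a * a * (S ⬝ᵥ S)
      · have h1s : lam * (a * a * (S ⬝ᵥ S)) < (-γ * φ) * (a * a * (S ⬝ᵥ S)) :=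
          mul_lt_mul_of_pos_right hlam_lt hApos
        linarith
      · have hAz : a * a * (S ⬝ᵥ S) = 0 := le_antisymm (not_lt.1 hApos) hA0
        have hBpos : 0 < b * b * (v2 ⬝ᵥ v2) := by
          rw [hxx, hAz] at hX
          linarith
        have h2s : lam' * (b * b * (v2 ⬝ᵥ v2)) < (-γ * φ) * (b * b * (v2 ⬝ᵥ v2)) :=
          mul_lt_mul_of_pos_right hlt' hBpos
        linarith
  · -- minimality
    intro μ hμ
    obtain ⟨y, hy, hyeig⟩ := hμ
    have h1 := hray y
    rw [hyeig, dotProduct_smul, smul_eq_mul] at h1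
    have h2 : 0 < y ⬝ᵥ y := dotProduct_self_pos hy
    nlinarith
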